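/- Let C ≥ 1 be an integer, let χ be a primitive Dirichlet character modulo C with values in ℂ, let ψ : ZMod C → ℂ be the standard additive character ψ(x) = exp(2πi·x̃/C) (for any lift x̃ of x), and let g ≥ 1. Then for every g×g matrix T over ZMod C whose determinant is a unit, the matrix Gauss sum satisfies Σ_{X} χ(det X) · ψ(tr(T·X)) = C^{g(g−1)/2} · χ(det T)⁻¹ · G(χ)^g, where the sum runs over all g×g matrices X over ZMod C and G(χ) = Σ_{x ∈ ZMod C} χ(x) ψ(x) is the ordinary Gauss sum of χ. -/

import Mathlib

open Matrix

/-- The standard additive character of `ZMod C` with values in `ℂ`,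
`x ↦ exp(2πi·x̃/C)` for `x̃` the standard lift of `x`. -/
noncomputable def stdAddChar (C : ℕ) (x : ZMod C) : ℂ :=
  Complex.exp (2 * Real.pi * Complex.I * (x.val : ℂ) / (C : ℂ))

/-!
Write `S n = ∑ X, χ (det X) ψ (tr X)` over `n × n` matrices. The substitution `X ↦ T X` reduces
the theorem to `S g = C^(g(g-1)/2) G(χ)^g`. Primitivity of `χ` gives
`χ d · G(χ⁻¹) = ∑ t, χ⁻¹ t · ψ (t d)`, so `G(χ⁻¹) S (n+1) = ∑ t, χ⁻¹ t ∑ X, ψ (t det X + tr X)`.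
Expanding `det X` along the first row `r` makes `t det X + tr X = r ⬝ᵥ (t c + e₀) + tr W`, where
`c` is the cofactor vector of the remaining rows `Z` and `W` is `Z` without its first column.
Summing over `r` keeps only `t c = -e₀`; since `c` is orthogonal to the rows of `Z`, this says
exactly that `t det W = -1` and the first column of `Z` vanishes. Hence
`G(χ⁻¹) S (n+1) = C^(n+1) χ(-1) S n`. For `n = 0` this is `G(χ⁻¹) G(χ) = C χ(-1)`, and dividing
by it gives `S (n+1) = C^n G(χ) S n`.
-/

open Finset

namespace AddChar

variable {A M : Type*} [AddCommMonoid A] [CommMonoid M]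

lemma map_sum_eq_prod (ψ : AddChar A M) {ι : Type*} (s : Finset ι) (f : ι → A) :
    ψ (∑ i ∈ s, f i) = ∏ i ∈ s, ψ (f i) := by
  classical
  induction s using Finset.induction with
  | empty => simp
  | insert a s h ih => rw [sum_insert h, prod_insert h, map_add_eq_mul, ih]

lemma sum_apply_dotProduct {R R' : Type*} [CommRing R] [Fintype R] [DecidableEq R]
    [CommRing R'] [IsDomain R'] {ψ : AddChar R R'} (hψ : ψ.IsPrimitive)
    {ι : Type*} [Fintype ι] [DecidableEq ι] (a : ι → R) :
    ∑ r : ι → R, ψ (r ⬝ᵥ a) = if a = 0 then (Fintype.card R : R') ^ Fintype.card ι else 0 := by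
  simp_rw [dotProduct, map_sum_eq_prod]
  rw [← Fintype.prod_sum fun i x => ψ (x * a i)]
  simp_rw [sum_mulShift _ hψ, Nat.cast_ite, Nat.cast_zero, Fintype.prod_ite_zero, prod_const,
    card_univ, ← funext_iff]
  rfl

end AddChar

namespace Matrix

section FirstRowExpansion

variable {R : Type*} [CommRing R] {n : ℕ}

def firstRowCofactors (Z : Matrix (Fin n) (Fin (n + 1)) R) : Fin (n + 1) → R :=
  fun j => (-1) ^ (j : ℕ) * (Z.submatrix id j.succAbove).det

lemma det_of_cons_eq_dotProduct (r : Fin (n + 1) → R) (Z : Matrix (Fin n) (Fin (n + 1)) R) :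
    (of (Fin.cons r Z)).det = r ⬝ᵥ firstRowCofactors Z := by
  rw [det_succ_row_zero, dotProduct]
  refine sum_congr rfl fun j _ => ?_
  simp only [of_apply, firstRowCofactors]
  rw [mul_left_comm, mul_assoc]
  rfl

lemma trace_of_cons (r : Fin (n + 1) → R) (Z : Matrix (Fin n) (Fin (n + 1)) R) :
    (of (Fin.cons r Z)).trace = r 0 + (Z.submatrix id Fin.succ).trace := by
  simp only [trace, diag_apply, of_apply, Fin.sum_univ_succ, submatrix_apply, id_eq]
  rfl

lemma row_dotProduct_firstRowCofactors (Z : Matrix (Fin n) (Fin (n + 1)) R) (i : Fin n) :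
    Z i ⬝ᵥ firstRowCofactors Z = 0 := by
  rw [← det_of_cons_eq_dotProduct]
  exact det_zero_of_row_eq (Fin.succ_ne_zero i).symm rfl

lemma firstRowCofactors_zero (Z : Matrix (Fin n) (Fin (n + 1)) R) :
    firstRowCofactors Z 0 = (Z.submatrix id Fin.succ).det := by
  simp [firstRowCofactors]

lemma firstRowCofactors_succ_of_col_zero {Z : Matrix (Fin n) (Fin (n + 1)) R}
    (hZ : ∀ i, Z i 0 = 0) (k : Fin n) : firstRowCofactors Z k.succ = 0 := by
  rw [firstRowCofactors, det_eq_zero_of_column_eq_zero ⟨0, k.pos⟩ fun i => ?_, mul_zero]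
  have h0 : k.succ.succAbove ⟨0, k.pos⟩ = 0 :=
    Fin.succAbove_of_castSucc_lt _ _ (by simp [Fin.lt_def])
  simpa [h0] using hZ i

lemma smul_firstRowCofactors_add_single_eq_zero_iff (t : R) (Z : Matrix (Fin n) (Fin (n + 1)) R) :
    t • firstRowCofactors Z + Pi.single 0 1 = 0 ↔
      t * (Z.submatrix id Fin.succ).det = -1 ∧ ∀ i, Z i 0 = 0 := by
  constructor
  · intro h
    constructor
    · have h0 := congrFun h 0
      simp only [Pi.add_apply, Pi.smul_apply, smul_eq_mul, firstRowCofactors_zero,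
        Pi.single_eq_same, Pi.zero_apply] at h0
      linear_combination h0
    · intro i
      have hi := congrArg (Z i ⬝ᵥ ·) h
      simpa [dotProduct_add, dotProduct_smul, row_dotProduct_firstRowCofactors] using hi
  · rintro ⟨hdet, hZ⟩
    ext j
    refine Fin.cases ?_ (fun k => ?_) j
    · simp [firstRowCofactors_zero, hdet]
    · simp [firstRowCofactors_succ_of_col_zero hZ]

end FirstRowExpansion

section SumSplit

variable {α M ι : Type*} [Fintype α] [AddCommMonoid M] [Fintype ι] [DecidableEq ι] {n : ℕ}

lemma sum_eq_sum_cons_row (f : Matrix (Fin (n + 1)) ι α → M) :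
    ∑ X, f X = ∑ r : ι → α, ∑ Z : Matrix (Fin n) ι α, f (of (Fin.cons r Z)) := by
  rw [← Fintype.sum_prod_type']
  exact (Fintype.sum_equiv ((Fin.consEquiv _).trans of) _ _ fun _ => rfl).symm

lemma sum_eq_sum_cons_col (f : Matrix ι (Fin (n + 1)) α → M) :
    ∑ Z, f Z = ∑ c : ι → α, ∑ W : Matrix ι (Fin n) α, f (of fun i => Fin.cons (c i) (W i)) := by
  rw [← Fintype.sum_prod_type']
  exact (Fintype.sum_equiv ((Equiv.arrowProdEquivProdArrow _ _ _).symm.trans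
    ((Equiv.piCongrRight fun _ => Fin.consEquiv _).trans of)) _ _ fun _ => rfl).symm

end SumSplit

end Matrix

theorem sum_addChar_mul_det_add_trace {R R' : Type*} [CommRing R] [Fintype R] [DecidableEq R]
    [CommRing R'] [IsDomain R'] {ψ : AddChar R R'} (hψ : ψ.IsPrimitive) (t : R) (n : ℕ) :
    ∑ X : Matrix (Fin (n + 1)) (Fin (n + 1)) R, ψ (t * X.det + X.trace) =
      (Fintype.card R : R') ^ (n + 1) *
        ∑ W : Matrix (Fin n) (Fin n) R, if t * W.det = -1 then ψ W.trace else 0 := by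
  have hrow : ∀ r (Z : Matrix (Fin n) (Fin (n + 1)) R),
      t * (of (Fin.cons r Z)).det + (of (Fin.cons r Z)).trace =
        r ⬝ᵥ (t • firstRowCofactors Z + Pi.single 0 1) + (Z.submatrix id Fin.succ).trace := by
    intro r Z
    rw [det_of_cons_eq_dotProduct, trace_of_cons, dotProduct_add, dotProduct_smul,
      dotProduct_single, smul_eq_mul, mul_one]
    ring
  rw [sum_eq_sum_cons_row, sum_comm]
  simp_rw [hrow, AddChar.map_add_eq_mul, ← sum_mul, AddChar.sum_apply_dotProduct hψ,
    smul_firstRowCofactors_add_single_eq_zero_iff, Fintype.card_fin, ite_mul, zero_mul]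
  simp_rw [← mul_ite_zero, ← mul_sum, sum_eq_sum_cons_col (n := n)]
  have hminor : ∀ (c : Fin n → R) (W : Matrix (Fin n) (Fin n) R),
      (of fun i => Fin.cons (c i) (W i)).submatrix id Fin.succ = W := fun _ _ => rfl
  simp_rw [hminor, of_apply, Fin.cons_zero, ← funext_iff, and_comm (a := t * _ = -1), ite_and]
  rw [sum_comm]
  simp only [Fintype.sum_ite_eq']

lemma MulChar.sum_ite_mul_eq_neg_one {R R' : Type*} [CommRing R] [Fintype R] [DecidableEq R]
    [CommSemiring R'] (χ : MulChar R R') (d : R) :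
    ∑ t, (if t * d = -1 then χ t else 0) = χ⁻¹ (-d) := by
  by_cases hd : IsUnit d
  · obtain ⟨u, rfl⟩ := hd
    have hsol : ∀ t : R, t * u = -1 ↔ t = ↑(-u)⁻¹ := fun t => by
      rw [← Units.eq_mul_inv_iff_mul_eq, neg_one_mul, inv_neg, Units.val_neg]
    simp_rw [hsol, Fintype.sum_ite_eq', MulChar.inv_apply, ← Units.val_neg, Ring.inverse_unit]
  · have hsol : ∀ t : R, t * d ≠ -1 := fun t h =>
      hd (IsUnit.of_mul_eq_one_right (-t) (by rw [neg_mul, h, neg_neg]))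
    simp [hsol, MulChar.map_nonunit _ (mt (IsUnit.neg_iff d).mp hd)]

lemma DirichletCharacter.IsPrimitive.inv {R : Type*} [CommMonoidWithZero R] {N : ℕ}
    {χ : DirichletCharacter R N} (hχ : χ.IsPrimitive) : χ⁻¹.IsPrimitive := by
  rwa [DirichletCharacter.IsPrimitive, DirichletCharacter.conductor_inv]

section MatrixGaussSum

variable {R R' : Type*} [CommRing R] [Fintype R]

noncomputable def matrixGaussSum [CommRing R'] (χ : MulChar R R') (ψ : AddChar R R') (n : ℕ) :
    R' :=
  ∑ X : Matrix (Fin n) (Fin n) R, χ X.det * ψ X.trace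

lemma matrixGaussSum_zero [CommRing R'] (χ : MulChar R R') (ψ : AddChar R R') :
    matrixGaussSum χ ψ 0 = 1 := by
  rw [matrixGaussSum, Fintype.sum_subsingleton _ 0]
  simp

lemma matrixGaussSum_one [CommRing R'] (χ : MulChar R R') (ψ : AddChar R R') :
    matrixGaussSum χ ψ 1 = gaussSum χ ψ :=
  Fintype.sum_equiv ((Equiv.funUnique _ _).trans (Equiv.funUnique _ _)) _ _ fun X =>
    congr_arg₂ (· * ·) (congrArg χ (det_fin_one X)) (congrArg ψ (trace_fin_one X))

lemma sum_det_mul_addChar_trace_mul [Field R'] (χ : MulChar R R') (ψ : AddChar R R') {n : ℕ}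
    {T : Matrix (Fin n) (Fin n) R} (hT : IsUnit T.det) :
    ∑ X, χ X.det * ψ (T * X).trace = (χ T.det)⁻¹ * matrixGaussSum χ ψ n := by
  rw [eq_inv_mul_iff_mul_eq₀ (hT.map χ).ne_zero, mul_sum]
  obtain ⟨U, rfl⟩ := (isUnit_iff_isUnit_det T).mpr hT
  exact Fintype.sum_bijective (fun X : Matrix (Fin n) (Fin n) R => U * X)
    (Units.mulLeft_bijective U) _ _ fun X => by rw [det_mul, map_mul, mul_assoc]

end MatrixGaussSum

section DirichletCharacter

variable {K : Type*} [CommRing K] [IsDomain K] {N : ℕ} [NeZero N] {χ : DirichletCharacter K N}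
  {e : AddChar (ZMod N) K}

lemma sum_inv_mul_addChar_mul (hχ : χ.IsPrimitive) (a : ZMod N) :
    ∑ t, χ⁻¹ t * e (t * a) = χ a * gaussSum χ⁻¹ e := by
  have h := gaussSum_mulShift_of_isPrimitive e hχ.inv a
  rw [inv_inv] at h
  simp_rw [← h, gaussSum, AddChar.mulShift_apply, mul_comm a]

lemma gaussSum_inv_mul_matrixGaussSum_succ (hχ : χ.IsPrimitive) (he : e.IsPrimitive) (n : ℕ) :
    gaussSum χ⁻¹ e * matrixGaussSum χ e (n + 1) =
      N ^ (n + 1) * χ (-1) * matrixGaussSum χ e n := by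
  calc gaussSum χ⁻¹ e * matrixGaussSum χ e (n + 1)
      = ∑ t, χ⁻¹ t *
          ∑ X : Matrix (Fin (n + 1)) (Fin (n + 1)) (ZMod N), e (t * X.det + X.trace) := by
        simp_rw [matrixGaussSum, mul_sum, ← mul_assoc, mul_comm (gaussSum _ _),
          ← sum_inv_mul_addChar_mul hχ, sum_mul, AddChar.map_add_eq_mul]
        rw [sum_comm]
        simp_rw [mul_assoc]
    _ = N ^ (n + 1) * ∑ W : Matrix (Fin n) (Fin n) (ZMod N),
          (∑ t, if t * W.det = -1 then χ⁻¹ t else 0) * e W.trace := by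
        simp_rw [sum_addChar_mul_det_add_trace he, ZMod.card, mul_left_comm (χ⁻¹ _), ← mul_sum,
          sum_mul, ite_mul, zero_mul, mul_sum, mul_ite, mul_zero]
        rw [sum_comm]
    _ = N ^ (n + 1) * χ (-1) * matrixGaussSum χ e n := by
        simp_rw [MulChar.sum_ite_mul_eq_neg_one, inv_inv, neg_eq_neg_one_mul (det _), map_mul,
          mul_assoc, ← mul_sum, matrixGaussSum]

lemma gaussSum_inv_mul_gaussSum (hχ : χ.IsPrimitive) (he : e.IsPrimitive) :
    gaussSum χ⁻¹ e * gaussSum χ e = N * χ (-1) := by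
  simpa [matrixGaussSum_zero, matrixGaussSum_one] using
    gaussSum_inv_mul_matrixGaussSum_succ hχ he 0

lemma matrixGaussSum_succ [NeZero (N : K)] (hχ : χ.IsPrimitive) (he : e.IsPrimitive) (n : ℕ) :
    matrixGaussSum χ e (n + 1) = N ^ n * gaussSum χ e * matrixGaussSum χ e n := by
  have hprod := gaussSum_inv_mul_gaussSum hχ he
  have hG : gaussSum χ⁻¹ e ≠ 0 := left_ne_zero_of_mul <| hprod ▸
    mul_ne_zero (NeZero.ne _) (isUnit_one.neg.map χ).ne_zero
  apply mul_left_cancel₀ hG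
  rw [gaussSum_inv_mul_matrixGaussSum_succ hχ he]
  linear_combination -(N ^ n * matrixGaussSum χ e n) * hprod

theorem matrixGaussSum_eq [NeZero (N : K)] (hχ : χ.IsPrimitive) (he : e.IsPrimitive) (g : ℕ) :
    matrixGaussSum χ e g = N ^ (g * (g - 1) / 2) * gaussSum χ e ^ g := by
  induction g with
  | zero => simp [matrixGaussSum_zero]
  | succ n ih =>
    rw [matrixGaussSum_succ hχ he, ih, ← Nat.choose_two_right, ← Nat.choose_two_right,
      Nat.choose_succ_succ', Nat.choose_one_right]
    ring

end DirichletCharacter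

lemma stdAddChar_eq_zmod_stdAddChar {C : ℕ} [NeZero C] (x : ZMod C) :
    stdAddChar C x = ZMod.stdAddChar x :=
  (ZMod.toCircle_apply x).symm

theorem matrix_gauss_sum_general (C : ℕ) [NeZero C]
    (χ : DirichletCharacter ℂ C) (hχ : χ.IsPrimitive)
    (g : ℕ)
    (T : Matrix (Fin g) (Fin g) (ZMod C)) (hT : IsUnit T.det) :
    (∑ X : Matrix (Fin g) (Fin g) (ZMod C),
        χ X.det * stdAddChar C ((T * X).trace)) =
      (C : ℂ) ^ (g * (g - 1) / 2) * (χ T.det)⁻¹ *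
        (∑ x : ZMod C, χ x * stdAddChar C x) ^ g := by
  simp_rw [stdAddChar_eq_zmod_stdAddChar]
  rw [sum_det_mul_addChar_trace_mul χ _ hT,
    matrixGaussSum_eq hχ (ZMod.isPrimitive_stdAddChar C), gaussSum]
  ring

/-- the matrix Gauss sum of a primitive Dirichlet character `χ`
modulo `C` against a matrix `T` with unit determinant equals
`C^(g(g−1)/2) · χ(det T)⁻¹ · G(χ)^g`. -/
theorem matrix_gauss_sum (C : ℕ) [NeZero C] (hC : 1 ≤ C)
    (χ : DirichletCharacter ℂ C) (hχ : χ.IsPrimitive)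
    (g : ℕ) (hg : 1 ≤ g)
    (T : Matrix (Fin g) (Fin g) (ZMod C)) (hT : IsUnit T.det) :
    (∑ X : Matrix (Fin g) (Fin g) (ZMod C),
        χ X.det * stdAddChar C ((T * X).trace)) =
      (C : ℂ) ^ (g * (g - 1) / 2) * (χ T.det)⁻¹ *
        (∑ x : ZMod C, χ x * stdAddChar C x) ^ g :=
  matrix_gauss_sum_general C χ hχ g T hT
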